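/- Let f be a Boolean function that is not identically 0 or 1. Then for k∈{0,1}, Γ^k(f) ≤ Γ(f). Specifically, given a goal function g for f with goal value Q, the function g^1 defined by g^1(b) = Q−1 if b contains a 0-certificate of f and g^1(b) = g(b) otherwise is a monotone submodular 1-goal function for f with goal value Q. -/

import Mathlib

attribute [local instance] Classical.propDecidable

/-- `b'` extends the partial assignment `b`: it agrees on all non-`*` coordinates of `b`. -/
def Extends {n : ℕ} (b' b : Fin n → Option Bool) : Prop :=
  ∀ i v, b i = some v → b' i = some v

/-- A total assignment `x` extends the partial assignment `b`. -/
def TExtends {n : ℕ} (x : Fin n → Bool) (b : Fin n → Option Bool) : Prop :=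
  ∀ i v, b i = some v → x i = v

/-- `b` is a certificate of `f`: `f` is constant on all total extensions of `b`. -/
def IsCert {n : ℕ} (f : (Fin n → Bool) → Bool) (b : Fin n → Option Bool) : Prop :=
  ∀ x y, TExtends x b → TExtends y b → f x = f y

/-- `b` is a `k`-certificate of `f`: it forces `f` to the value `k`. -/
def IsKCert {n : ℕ} (f : (Fin n → Bool) → Bool) (k : Bool) (b : Fin n → Option Bool) : Prop :=
  ∀ x, TExtends x b → f x = k

/-- A certificate is minimal if no proper restriction of it is a certificate. -/
def MinCert {n : ℕ} (f : (Fin n → Bool) → Bool) (c : Fin n → Option Bool) : Prop :=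
  IsCert f c ∧ ∀ c', Extends c c' → c' ≠ c → ¬ IsCert f c'

/-- A `k`-certificate is minimal if no proper restriction of it is a `k`-certificate. -/
def MinKCert {n : ℕ} (f : (Fin n → Bool) → Bool) (k : Bool) (c : Fin n → Option Bool) : Prop :=
  IsKCert f k c ∧ ∀ c', Extends c c' → c' ≠ c → ¬ IsKCert f k c'

/-- Monotone utility function: filling in `*`'s never decreases the value. -/
def Mono {n : ℕ} (g : (Fin n → Option Bool) → ℕ) : Prop :=
  ∀ b b', Extends b' b → g b ≤ g b'

/-- Submodular utility function: marginal gains shrink under extension. -/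
def Submod {n : ℕ} (g : (Fin n → Option Bool) → ℕ) : Prop :=
  ∀ b b' (i : Fin n) (ℓ : Bool), Extends b' b → b i = none → b' i = none →
    g (Function.update b' i (some ℓ)) + g b ≤ g (Function.update b i (some ℓ)) + g b'

/-- `g` is a goal function for `f` with goal value `Q`. -/
def GoalFn {n : ℕ} (f : (Fin n → Bool) → Bool) (g : (Fin n → Option Bool) → ℕ)
    (Q : ℕ) : Prop :=
  Mono g ∧ Submod g ∧ ∀ b, g b = Q ↔ IsCert f b

/-- `g` is a `k`-goal function for `f` with goal value `Q`. -/
def KGoalFn {n : ℕ} (f : (Fin n → Bool) → Bool) (k : Bool)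
    (g : (Fin n → Option Bool) → ℕ) (Q : ℕ) : Prop :=
  Mono g ∧ Submod g ∧ (∀ b, IsKCert f k b → g b = Q) ∧ (∀ b, ¬ IsKCert f k b → g b < Q)

/-- The goal value `Γ(f)`: the minimum goal value of any goal function for `f`. -/
noncomputable def gamma {n : ℕ} (f : (Fin n → Bool) → Bool) : ℕ :=
  sInf {Q | ∃ g, GoalFn f g Q}

/-- The `k`-goal value `Γ^k(f)`. -/
noncomputable def gammaK {n : ℕ} (f : (Fin n → Bool) → Bool) (k : Bool) : ℕ :=
  sInf {Q | ∃ g, KGoalFn f k g Q}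

/-- The weight of a partial assignment: the number of non-`*` coordinates. -/
noncomputable def wt {n : ℕ} (b : Fin n → Option Bool) : ℕ :=
  (Finset.univ.filter (fun i => (b i).isSome)).card

/-- `f` depends on its `i`-th variable. -/
def DependsOnVar {n : ℕ} (f : (Fin n → Bool) → Bool) (i : Fin n) : Prop :=
  ∃ x, f (Function.update x i true) ≠ f (Function.update x i false)

/-! Lowering `g` by one on the `0`-certificates keeps it monotone and submodular: the
`0`-certificates form an up-set on which `g` is already maximal, and the other maximal points, the
`1`-certificates, form an up-set disjoint from it. Applied to a goal function of optimal value,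
this gives `Γᵏ(f) ≤ Γ(f)`. -/

open Function

section Extends

variable {n : ℕ} {b b' : Fin n → Option Bool} {i : Fin n}

lemma extends_update_of_eq_none (hbi : b i = none) (ℓ : Bool) :
    Extends (update b i (some ℓ)) b := by
  intro j v hv
  rcases eq_or_ne j i with rfl | hj
  · simp [hbi] at hv
  · rwa [update_of_ne hj]

lemma Extends.update (h : Extends b' b) (v : Option Bool) :
    Extends (update b' i v) (update b i v) := by
  intro j w hw
  rcases eq_or_ne j i with rfl | hj
  · rwa [update_self] at hw ⊢
  · rw [update_of_ne hj] at hw ⊢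
    exact h j w hw

lemma TExtends.of_extends {x : Fin n → Bool} (h : Extends b' b) (hx : TExtends x b') :
    TExtends x b :=
  fun i v hv => hx i v (h i v hv)

lemma exists_tExtends (b : Fin n → Option Bool) : ∃ x, TExtends x b :=
  ⟨fun i => (b i).getD false, fun i v h => by simp [h]⟩

end Extends

def UpClosed {n : ℕ} (C : (Fin n → Option Bool) → Prop) : Prop :=
  ∀ b b', Extends b' b → C b → C b'

section Lower

variable {n : ℕ} {g : (Fin n → Option Bool) → ℕ} {Q : ℕ}
  {C : (Fin n → Option Bool) → Prop}

lemma Mono.ite_upClosed (hm : Mono g) (hle : ∀ b, g b ≤ Q) (hC : UpClosed C)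
    (hK : UpClosed fun b => g b = Q ∧ ¬ C b) :
    Mono fun b => if C b then Q - 1 else g b := by
  intro b b' hbb'
  by_cases hb : C b
  · simp [hb, hC b b' hbb' hb]
  by_cases hb' : C b'
  · have hne : g b ≠ Q := fun hQ => (hK b b' hbb' ⟨hQ, hb⟩).2 hb'
    have := hle b
    simp only [hb, hb', if_false, if_true]
    omega
  · simpa [hb, hb'] using hm b b' hbb'

lemma Submod.ite_upClosed (hm : Mono g) (hs : Submod g) (hle : ∀ b, g b ≤ Q)
    (hCQ : ∀ b, C b → g b = Q) (hC : UpClosed C) (hK : UpClosed fun b => g b = Q ∧ ¬ C b) :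
    Submod fun b => if C b then Q - 1 else g b := by
  intro b b' i ℓ hbb' hbi hb'i
  have hsub := hs b b' i ℓ hbb' hbi hb'i
  have hbu := extends_update_of_eq_none hbi ℓ
  have hb'u' := extends_update_of_eq_none hb'i ℓ
  have huu' := hbb'.update (i := i) (some ℓ)
  generalize update b i (some ℓ) = u at *
  generalize update b' i (some ℓ) = u' at *
  by_cases hb : C b
  · simp [hb, hC b u hbu hb, hC b b' hbb' hb, hC u u' huu' (hC b u hbu hb)]
  by_cases hu' : C u'
  swap
  · have hu : ¬ C u := fun h => hu' (hC u u' huu' h)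
    have hb' : ¬ C b' := fun h => hu' (hC b' u' hb'u' h)
    simpa [hb, hu, hb', hu'] using hsub
  have := hle b
  have := hm b u hbu
  have := hm b b' hbb'
  have := hCQ u' hu'
  by_cases hu : C u <;> by_cases hb' : C b' <;> simp only [hb, hu, hb', hu', if_true, if_false]
  · -- `b` lies below the up-set `C`, so it cannot be a maximal point outside `C`
    have : g b ≠ Q := fun hQ => (hK b b' hbb' ⟨hQ, hb⟩).2 hb'
    omega
  all_goals omega

end Lower

section Cert

variable {n : ℕ} {f : (Fin n → Bool) → Bool} {k : Bool} {b : Fin n → Option Bool}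

lemma IsKCert.mono {b' : Fin n → Option Bool} (h : Extends b' b) (hb : IsKCert f k b) :
    IsKCert f k b' :=
  fun x hx => hb x (hx.of_extends h)

lemma upClosed_isKCert : UpClosed (IsKCert f k) :=
  fun _ _ h hb => hb.mono h

lemma IsKCert.isCert (h : IsKCert f k b) : IsCert f b :=
  fun x y hx hy => (h x hx).trans (h y hy).symm

lemma IsKCert.not_isKCert_not (h : IsKCert f k b) : ¬ IsKCert f (!k) b := by
  intro h'
  obtain ⟨x, hx⟩ := exists_tExtends b
  have := (h x hx).symm.trans (h' x hx)
  cases k <;> simp at this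

lemma IsCert.isKCert_or_isKCert_not (h : IsCert f b) (k : Bool) :
    IsKCert f k b ∨ IsKCert f (!k) b := by
  obtain ⟨x, hx⟩ := exists_tExtends b
  have hfx : f x = k ∨ f x = !k := by cases f x <;> cases k <;> simp
  exact hfx.imp (fun e y hy => (h y x hy hx).trans e) (fun e y hy => (h y x hy hx).trans e)

lemma isCert_some (f : (Fin n → Bool) → Bool) (x : Fin n → Bool) :
    IsCert f (fun i => some (x i)) := by
  intro y z hy hz
  have hyx : y = x := funext fun i => hy i (x i) rfl
  have hzx : z = x := funext fun i => hz i (x i) rfl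
  rw [hyx, hzx]

end Cert

namespace GoalFn

variable {n : ℕ} {f : (Fin n → Bool) → Bool} {g : (Fin n → Option Bool) → ℕ} {Q : ℕ}

lemma le (hg : GoalFn f g Q) (b : Fin n → Option Bool) : g b ≤ Q := by
  obtain ⟨x, hx⟩ := exists_tExtends b
  have hbx : Extends (fun i => some (x i)) b := fun i v hv => congrArg some (hx i v hv)
  simpa [(hg.2.2 _).2 (isCert_some f x)] using hg.1 b _ hbx

lemma pos_of_ne (hg : GoalFn f g Q) {x y : Fin n → Bool} (hxy : f x ≠ f y) : 0 < Q := by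
  have hnc : ¬ IsCert f (fun _ => none) := fun h =>
    hxy (h x y (by simp [TExtends]) (by simp [TExtends]))
  have hne : g (fun _ => none) ≠ Q := fun h => hnc ((hg.2.2 _).1 h)
  have := hg.le (fun _ => none)
  omega

lemma eq_and_not_isKCert_not_iff (hg : GoalFn f g Q) (k : Bool) (b : Fin n → Option Bool) :
    (g b = Q ∧ ¬ IsKCert f (!k) b) ↔ IsKCert f k b := by
  rw [hg.2.2]
  constructor
  · rintro ⟨hc, hnk⟩
    exact (hc.isKCert_or_isKCert_not k).resolve_right hnk
  · exact fun h => ⟨h.isCert, h.not_isKCert_not⟩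

theorem toKGoalFn (hg : GoalFn f g Q) (k : Bool) (hk : ∃ x, f x = k) :
    KGoalFn f k (fun b => if IsKCert f (!k) b then Q - 1 else g b) Q := by
  have hCQ : ∀ b, IsKCert f (!k) b → g b = Q := fun b h => (hg.2.2 b).2 h.isCert
  have hK : UpClosed fun b => g b = Q ∧ ¬ IsKCert f (!k) b := by
    simpa only [hg.eq_and_not_isKCert_not_iff k] using upClosed_isKCert
  refine ⟨hg.1.ite_upClosed hg.le upClosed_isKCert hK,
    hg.2.1.ite_upClosed hg.1 hg.le hCQ upClosed_isKCert hK,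
    fun b hb => ?_, fun b hb => ?_⟩
  · have ⟨hQ, hnk⟩ := (hg.eq_and_not_isKCert_not_iff k b).2 hb
    simp [hnk, hQ]
  · by_cases hnk : IsKCert f (!k) b
    · obtain ⟨x, hx⟩ := hk
      obtain ⟨y, hy⟩ := exists_tExtends b
      have hQ := hg.pos_of_ne (x := x) (y := y) (by cases k <;> simp_all [hnk y hy])
      simp only [hnk, if_true]
      omega
    · have hne : g b ≠ Q := fun h => hb ((hg.eq_and_not_isKCert_not_iff k b).1 ⟨h, hnk⟩)
      have := hg.le b
      simp only [hnk, if_false]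
      omega

end GoalFn

/-- if `f` is not constant then `Γᵏ(f) ≤ Γ(f)` for `k ∈ {0,1}`; specifically,
from a goal function `g` for `f` with goal value `Q`, the function equal to `Q − 1` on
partial assignments containing a 0-certificate and to `g` elsewhere is a 1-goal function
for `f` with goal value `Q`. -/
theorem stmt18 {n : ℕ} (f : (Fin n → Bool) → Bool)
    (h0 : ∃ x, f x = false) (h1 : ∃ x, f x = true)
    (g : (Fin n → Option Bool) → ℕ) (Q : ℕ) (hg : GoalFn f g Q) :
    KGoalFn f true (fun b => if IsKCert f false b then Q - 1 else g b) Q ∧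
    ∀ k : Bool, gammaK f k ≤ gamma f := by
  refine ⟨hg.toKGoalFn true h1, fun k => ?_⟩
  obtain ⟨g', hg'⟩ := Nat.sInf_mem (⟨Q, g, hg⟩ : {Q | ∃ g, GoalFn f g Q}.Nonempty)
  exact Nat.sInf_le ⟨_, hg'.toKGoalFn k (by cases k <;> assumption)⟩
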